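/- arXiv:2603.28484 — 4 statements merged into one kernel-verified Lean document; each statement's English description precedes it below -/
import Mathlib

section
/- Let Φ : ℝ^d × ℝ^n → ℝ be such that y ↦ Φ(x,y) is μ-strongly concave for every x, and x ↦ ∇_y Φ(x,y) is L_{yx}-Lipschitz for every y. Let h : ℝ^n → ℝ ∪ {+∞} be proper, convex, lower semicontinuous. Then the solution map y*(x) = argmax_{y} (Φ(x,y) - h(y)) is single-valued and (L_{yx}/μ)-Lipschitz continuous. -/
/-!
On the effective domain `D = {h < ⊤}` the objective `Φ(x,·) - h` is the real function
`f_x = Φ(x,·) - h.toReal`, which is `μ`-strongly concave, and off `D` it is `⊥`. Upper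
semicontinuity gives a maximizer on a large closed ball, and strong concavity shows that far from
a point of `D` the objective is smaller than there, so this is a global maximizer; strict
concavity makes it unique. At the maximizer `y*(x)` strong concavity gives the quadratic growth
`f_x y + μ/2 ‖y - y*(x)‖² ≤ f_x (y*(x))`; adding these for `x₁` and `x₂` yields
`μ ‖y₁ - y₂‖² ≤ (f_{x₁} - f_{x₂}) y₁ - (f_{x₁} - f_{x₂}) y₂`, and
`f_{x₁} - f_{x₂} = Φ(x₁,·) - Φ(x₂,·)` is `L_yx ‖x₁ - x₂‖`-Lipschitz by the mean value inequality.
-/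

open scoped NNReal
open Set Filter Topology

section StrongConcavity

variable {E : Type*} [NormedAddCommGroup E] [NormedSpace ℝ E] {s t : Set E} {m : ℝ}
  {f g : E → ℝ} {x y y₀ : E}

lemma StrongConcaveOn.subset (hf : StrongConcaveOn t m f) (hst : s ⊆ t) (hs : Convex ℝ s) :
    StrongConcaveOn s m f :=
  ⟨hs, fun _ hx _ hy _ _ ha hb hab => hf.2 (hst hx) (hst hy) ha hb hab⟩

lemma StrongConcaveOn.sub_convexOn (hf : StrongConcaveOn s m f) (hg : ConvexOn ℝ s g) :
    StrongConcaveOn s m (f - g) := by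
  simpa [StrongConcaveOn] using hf.sub hg.uniformConvexOn_zero

lemma StrongConcaveOn.add_sq_le_of_isMaxOn (hf : StrongConcaveOn s m f) (hx : x ∈ s)
    (hmax : IsMaxOn f s x) (hy : y ∈ s) : f y + m / 2 * ‖y - x‖ ^ 2 ≤ f x := by
  have hseg : ∀ t ∈ Ioo (0 : ℝ) 1, f y + m / 2 * (1 - t) * ‖y - x‖ ^ 2 ≤ f x := by
    rintro t ⟨ht₀, ht₁⟩
    have hconc := hf.2 hy hx ht₀.le (sub_nonneg.2 ht₁.le) (add_sub_cancel t 1)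
    have hle : f (t • y + (1 - t) • x) ≤ f x :=
      hmax (hf.1 hy hx ht₀.le (sub_nonneg.2 ht₁.le) (add_sub_cancel t 1))
    simp only [smul_eq_mul] at hconc
    have : t * (f y + m / 2 * (1 - t) * ‖y - x‖ ^ 2) ≤ t * f x := by linarith
    exact le_of_mul_le_mul_left this ht₀
  have hlim : Tendsto (fun t : ℝ => f y + m / 2 * (1 - t) * ‖y - x‖ ^ 2) (𝓝[>] 0)
      (𝓝 (f y + m / 2 * ‖y - x‖ ^ 2)) := by
    refine tendsto_nhdsWithin_of_tendsto_nhds ((by fun_prop : Continuous _).tendsto' 0 _ ?_)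
    simp
  exact le_of_tendsto hlim (eventually_of_mem (Ioo_mem_nhdsGT one_pos) hseg)

lemma StrongConcaveOn.norm_sub_le_of_isMaxOn {C : ℝ≥0} (hm : 0 < m)
    (hf : StrongConcaveOn s m f) (hg : StrongConcaveOn s m g) (hfg : LipschitzOnWith C (f - g) s)
    (hx : x ∈ s) (hy : y ∈ s) (hfx : IsMaxOn f s x) (hgy : IsMaxOn g s y) :
    ‖x - y‖ ≤ C / m := by
  have hfy := hf.add_sq_le_of_isMaxOn hx hfx hy
  have hgx := hg.add_sq_le_of_isMaxOn hy hgy hx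
  have hdiff := (hfg.dist_le_mul x hx y hy).trans' (le_abs_self _)
  rw [norm_sub_rev] at hfy
  simp only [Pi.sub_apply, dist_eq_norm] at hdiff
  have hsq : m * ‖x - y‖ * ‖x - y‖ ≤ C * ‖x - y‖ := by nlinarith
  rcases (norm_nonneg (x - y)).eq_or_lt with h0 | hpos
  · rw [← h0]; positivity
  · rw [le_div_iff₀ hm, mul_comm]
    exact le_of_mul_le_mul_right hsq hpos

lemma StrongConcaveOn.apply_lt_of_le_norm_sub {ε : ℝ} (hf : StrongConcaveOn s m f) (hm : 0 < m)
    (hε : 0 < ε) (hy₀ : y₀ ∈ s) (hnear : ∀ z ∈ s, ‖z - y₀‖ = ε → f z < f y₀ + 1) (hy : y ∈ s)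
    (hfar : ε + 2 / (m * ε) ≤ ‖y - y₀‖) : f y < f y₀ := by
  set r := ‖y - y₀‖
  have hr : ε < r := lt_of_lt_of_le (lt_add_of_pos_right ε (by positivity)) hfar
  have hr₀ : 0 < r := hε.trans hr
  set t := ε / r
  have ht₀ : 0 < t := by positivity
  have ht₁ : t < 1 := (div_lt_one hr₀).2 hr
  have hz : t • y + (1 - t) • y₀ - y₀ = t • (y - y₀) := by module
  have hznorm : ‖t • y + (1 - t) • y₀ - y₀‖ = ε := by
    rw [hz, norm_smul, Real.norm_of_nonneg ht₀.le, div_mul_cancel₀ _ hr₀.ne']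
  have hconc := hf.2 hy hy₀ ht₀.le (sub_nonneg.2 ht₁.le) (add_sub_cancel t 1)
  have hlt := hnear _ (hf.1 hy hy₀ ht₀.le (sub_nonneg.2 ht₁.le) (add_sub_cancel t 1)) hznorm
  have hgain : 1 ≤ t * (1 - t) * (m / 2 * r ^ 2) :=
    calc 1 = m * ε / 2 * (2 / (m * ε)) := by field_simp
      _ ≤ m * ε / 2 * (r - ε) := by gcongr; linarith
      _ = t * (1 - t) * (m / 2 * r ^ 2) := by simp only [t]; field_simp
  simp only [smul_eq_mul] at hconc
  have : t * f y < t * f y₀ := by linarith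
  exact lt_of_mul_lt_mul_left this ht₀.le

lemma lipschitzWith_of_isMaxOn_strongConcaveOn {X : Type*} [PseudoMetricSpace X]
    {F : X → E → ℝ} {ys : X → E} {K : ℝ} (hm : 0 < m) (hK : 0 ≤ K)
    (hF : ∀ x, StrongConcaveOn s m (F x)) (hys : ∀ x, ys x ∈ s)
    (hmax : ∀ x, IsMaxOn (F x) s (ys x))
    (hlip : ∀ x₁ x₂, LipschitzOnWith (K * dist x₁ x₂).toNNReal (F x₁ - F x₂) s) :
    LipschitzWith (K / m).toNNReal ys := by
  refine LipschitzWith.of_dist_le_mul fun x₁ x₂ => ?_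
  have := (hF x₁).norm_sub_le_of_isMaxOn hm (hF x₂) (hlip x₁ x₂) (hys x₁) (hys x₂) (hmax x₁)
    (hmax x₂)
  rw [Real.coe_toNNReal _ (by positivity)] at this
  rw [dist_eq_norm, Real.coe_toNNReal _ (by positivity), div_mul_eq_mul_div]
  exact this

end StrongConcavity

lemma convexOn_toReal_setOf_ne_top {E : Type*} [AddCommGroup E] [Module ℝ E] {h : E → EReal}
    (hbot : ∀ y, h y ≠ ⊥)
    (hconv : ∀ y₁ y₂ : E, ∀ t : ℝ, 0 ≤ t → t ≤ 1 →
      h (t • y₁ + (1 - t) • y₂) ≤ (t : EReal) * h y₁ + ((1 - t : ℝ) : EReal) * h y₂) :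
    ConvexOn ℝ {y | h y ≠ ⊤} fun y => (h y).toReal := by
  have hcomb : ∀ ⦃y₁⦄, h y₁ ≠ ⊤ → ∀ ⦃y₂⦄, h y₂ ≠ ⊤ → ∀ ⦃a b : ℝ⦄, 0 ≤ a → 0 ≤ b → a + b = 1 →
      h (a • y₁ + b • y₂) ≤ ((a * (h y₁).toReal + b * (h y₂).toReal : ℝ) : EReal) := by
    intro y₁ h₁ y₂ h₂ a b ha hb hab
    obtain rfl : b = 1 - a := by linarith
    have := hconv y₁ y₂ a ha (by linarith)
    rwa [← EReal.coe_toReal h₁ (hbot y₁), ← EReal.coe_toReal h₂ (hbot y₂), ← EReal.coe_mul,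
      ← EReal.coe_mul, ← EReal.coe_add] at this
  refine ⟨fun y₁ h₁ y₂ h₂ a b ha hb hab =>
    ne_top_of_le_ne_top (EReal.coe_ne_top _) (hcomb h₁ h₂ ha hb hab),
    fun y₁ h₁ y₂ h₂ a b ha hb hab => ?_⟩
  simpa only [EReal.toReal_coe, smul_eq_mul] using
    EReal.toReal_le_toReal (hcomb h₁ h₂ ha hb hab) (hbot _) (EReal.coe_ne_top _)

lemma Continuous.upperSemicontinuous_coe_sub {α : Type*} [TopologicalSpace α] {g : α → ℝ}
    {h : α → EReal} (hg : Continuous g) (hh : LowerSemicontinuous h) :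
    UpperSemicontinuous fun y => (g y : EReal) - h y := by
  have hneg : UpperSemicontinuous fun y => -h y :=
    continuous_neg.comp_lowerSemicontinuous_antitone hh fun _ _ => EReal.neg_le_neg_iff.2
  have hcoe : UpperSemicontinuous fun y => (g y : EReal) :=
    (continuous_coe_real_ereal.comp hg).upperSemicontinuous
  simpa only [sub_eq_add_neg] using hcoe.add' hneg fun y =>
    EReal.continuousAt_add (Or.inl (EReal.coe_ne_top _)) (Or.inl (EReal.coe_ne_bot _))

section ExtendedReal

variable {E : Type*} {F : E → EReal} {f : E → ℝ} {s : Set E}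

lemma isMaxOn_univ_iff_of_eq_bot (hs : s.Nonempty) (hFs : ∀ y ∈ s, F y = f y)
    (hFbot : ∀ y ∉ s, F y = ⊥) {x : E} : IsMaxOn F univ x ↔ x ∈ s ∧ IsMaxOn f s x := by
  constructor
  · intro hx
    obtain ⟨y₀, hy₀⟩ := hs
    have hxs : x ∈ s := by
      by_contra hxs
      have : F y₀ ≤ F x := hx (mem_univ y₀)
      rw [hFbot x hxs, hFs y₀ hy₀] at this
      exact EReal.coe_ne_bot _ (le_bot_iff.1 this)
    refine ⟨hxs, fun y hy => ?_⟩
    have : F y ≤ F x := hx (mem_univ y)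
    rw [hFs y hy, hFs x hxs] at this
    exact EReal.coe_le_coe_iff.1 this
  · rintro ⟨hxs, hx⟩ y -
    show F y ≤ F x
    by_cases hy : y ∈ s
    · rw [hFs y hy, hFs x hxs]
      exact EReal.coe_le_coe_iff.2 (hx hy)
    · rw [hFbot y hy]
      exact bot_le

lemma exists_isMaxOn_of_strongConcaveOn [NormedAddCommGroup E] [NormedSpace ℝ E]
    [ProperSpace E] {m : ℝ} {y₀ : E} (hm : 0 < m)
    (hF : UpperSemicontinuous F) (hf : StrongConcaveOn s m f) (hFs : ∀ y ∈ s, F y = f y)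
    (hFbot : ∀ y ∉ s, F y = ⊥) (hy₀ : y₀ ∈ s) : ∃ x, IsMaxOn F univ x := by
  have hy₀F : F y₀ < ((f y₀ + 1 : ℝ) : EReal) := by
    rw [hFs y₀ hy₀]; exact_mod_cast lt_add_one (f y₀)
  obtain ⟨δ, hδ, hball⟩ := Metric.eventually_nhds_iff.1 (hF y₀ _ hy₀F)
  have hnear : ∀ z ∈ s, ‖z - y₀‖ = δ / 2 → f z < f y₀ + 1 := fun z hz hzδ => by
    have : F z < _ := hball (by rw [dist_eq_norm, hzδ]; linarith)
    rwa [hFs z hz, EReal.coe_lt_coe_iff] at this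
  set R := δ / 2 + 2 / (m * (δ / 2))
  have hR : 0 ≤ R := by positivity
  have hfar : ∀ y, R ≤ ‖y - y₀‖ → F y ≤ F y₀ := fun y hy => by
    by_cases hys : y ∈ s
    · rw [hFs y hys, hFs y₀ hy₀, EReal.coe_le_coe_iff]
      exact (hf.apply_lt_of_le_norm_sub hm (half_pos hδ) hy₀ hnear hys hy).le
    · rw [hFbot y hys]
      exact bot_le
  obtain ⟨x, -, hx⟩ := (hF.upperSemicontinuousOn _).exists_isMaxOn
    ⟨y₀, Metric.mem_closedBall_self hR⟩ (isCompact_closedBall y₀ R)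
  refine ⟨x, fun y _ => ?_⟩
  by_cases hy : y ∈ Metric.closedBall y₀ R
  · exact hx hy
  · rw [Metric.mem_closedBall, not_le, dist_eq_norm] at hy
    exact (hfar y hy.le).trans (hx (Metric.mem_closedBall_self hR))

end ExtendedReal

lemma HasGradientAt.sub {F : Type*} [NormedAddCommGroup F] [InnerProductSpace ℝ F]
    [CompleteSpace F] {f g : F → ℝ} {f' g' x : F} (hf : HasGradientAt f f' x)
    (hg : HasGradientAt g g' x) : HasGradientAt (f - g) (f' - g') x := by
  rw [hasGradientAt_iff_hasFDerivAt, map_sub]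
  exact hf.hasFDerivAt.sub hg.hasFDerivAt

lemma lipschitzWith_of_hasGradientAt_of_norm_le {F : Type*} [NormedAddCommGroup F]
    [InnerProductSpace ℝ F] [CompleteSpace F] {f : F → ℝ} {f' : F → F} {C : ℝ≥0}
    (hf : ∀ x, HasGradientAt f (f' x) x) (hC : ∀ x, ‖f' x‖ ≤ C) : LipschitzWith C f := by
  rw [← lipschitzOnWith_univ]
  refine convex_univ.lipschitzOnWith_of_nnnorm_hasFDerivWithin_le
    (fun x _ => (hf x).hasFDerivAt.hasFDerivWithinAt) fun x _ => ?_
  rw [LinearIsometryEquiv.nnnorm_map, ← NNReal.coe_le_coe, coe_nnnorm]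
  exact hC x

/-- Lipschitz continuity of the solution mapping: if `Φ(x,·)` is `μ`-strongly concave for
every `x`, `x ↦ ∇_y Φ(x,y)` is `L_yx`-Lipschitz for every `y`, and `h` is proper convex
l.s.c. (extended-real valued), then `x ↦ argmax_y (Φ(x,y) - h(y))` is single-valued and
`(L_yx/μ)`-Lipschitz. -/
theorem stmt_3 {d n : ℕ} (Φ : EuclideanSpace ℝ (Fin d) → EuclideanSpace ℝ (Fin n) → ℝ)
    (gradyΦ : EuclideanSpace ℝ (Fin d) → EuclideanSpace ℝ (Fin n) → EuclideanSpace ℝ (Fin n))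
    (μ Lyx : ℝ) (hμ : 0 < μ) (hLyx : 0 < Lyx)
    (hgrad : ∀ x y, HasGradientAt (Φ x) (gradyΦ x y) y)
    (hsconc : ∀ x, ConvexOn ℝ Set.univ
      (fun y : EuclideanSpace ℝ (Fin n) => -Φ x y - μ / 2 * ‖y‖ ^ 2))
    (hlipx : ∀ y x₁ x₂, ‖gradyΦ x₁ y - gradyΦ x₂ y‖ ≤ Lyx * ‖x₁ - x₂‖)
    (h : EuclideanSpace ℝ (Fin n) → EReal)
    (hproper : ∃ y, h y < ⊤) (hnobot : ∀ y, h y ≠ ⊥)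
    (hconv : ∀ y₁ y₂ : EuclideanSpace ℝ (Fin n), ∀ t : ℝ, 0 ≤ t → t ≤ 1 →
      h (t • y₁ + (1 - t) • y₂) ≤ (t : EReal) * h y₁ + ((1 - t : ℝ) : EReal) * h y₂)
    (hlsc : LowerSemicontinuous h) :
    ∃ ystar : EuclideanSpace ℝ (Fin d) → EuclideanSpace ℝ (Fin n),
      (∀ x, IsMaxOn (fun y => (Φ x y : EReal) - h y) Set.univ (ystar x)) ∧
      (∀ x y, IsMaxOn (fun y' => (Φ x y' : EReal) - h y') Set.univ y → y = ystar x) ∧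
      LipschitzWith (Lyx / μ).toNNReal ystar := by
  obtain ⟨y₀, hy₀⟩ := hproper
  set D := {y | h y ≠ ⊤}
  have hhD := convexOn_toReal_setOf_ne_top hnobot hconv
  have hfD : ∀ x, StrongConcaveOn D μ (Φ x - fun y => (h y).toReal) := fun x => by
    have hΦ : StrongConcaveOn univ μ (Φ x) :=
      neg_neg (Φ x) ▸ (strongConvexOn_iff_convex (f := -Φ x) |>.2 (hsconc x)).neg
    exact (hΦ.subset (subset_univ D) hhD.1).sub_convexOn hhD
  have hFD : ∀ x, ∀ y ∈ D, (Φ x y : EReal) - h y = (Φ x y - (h y).toReal : ℝ) :=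
    fun x y hy => by rw [EReal.coe_sub, EReal.coe_toReal hy (hnobot y)]
  have hFbot : ∀ x, ∀ y ∉ D, (Φ x y : EReal) - h y = ⊥ :=
    fun x y hy => by rw [not_not.1 hy, EReal.sub_top]
  have hmax_iff := fun x y => isMaxOn_univ_iff_of_eq_bot ⟨y₀, hy₀.ne⟩ (hFD x) (hFbot x) (x := y)
  have hΦcont : ∀ x, Continuous (Φ x) := fun x =>
    continuous_iff_continuousAt.2 fun y => (hgrad x y).differentiableAt.continuousAt
  choose ystar hystar using fun x => exists_isMaxOn_of_strongConcaveOn hμ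
    ((hΦcont x).upperSemicontinuous_coe_sub hlsc) (hfD x) (hFD x) (hFbot x) hy₀.ne
  have hystarD := fun x => (hmax_iff x _).1 (hystar x)
  refine ⟨ystar, hystar, fun x y hy => ?_, ?_⟩
  · obtain ⟨hyD, hy⟩ := (hmax_iff x y).1 hy
    exact ((hfD x).strictConcaveOn hμ).eq_of_isMaxOn hy (hystarD x).2 hyD (hystarD x).1
  refine lipschitzWith_of_isMaxOn_strongConcaveOn hμ hLyx.le hfD (fun x => (hystarD x).1)
    (fun x => (hystarD x).2) fun x₁ x₂ => ?_
  rw [sub_sub_sub_cancel_right, dist_eq_norm]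
  exact (lipschitzWith_of_hasGradientAt_of_norm_le (fun y => (hgrad x₁ y).sub (hgrad x₂ y))
    fun y => (hlipx y x₁ x₂).trans (Real.le_coe_toNNReal _)).lipschitzOnWith
end

section
/- Let φ be differentiable with L_φ-Lipschitz gradient, and let x_{k+1} = x_k - η_x ∇_x Φ(x_k, y_k), where ∇φ(x_k) = ∇_x Φ(x_k, y*(x_k)) and ‖∇φ(x_k) - ∇_x Φ(x_k,y_k)‖ ≤ L_{xy}‖y*(x_k) - y_k‖. Then for any η_x > 0 and any N ≥ 1: φ(x_N) ≤ φ(x_0) - (η_x/2)(1 - 2L_φ η_x) ∑_{k=0}^{N-1} ‖∇φ(x_k)‖² + (η_x/2)(1 + 2L_φ η_x) L_{xy}² ∑_{k=0}^{N-1} ‖y*(x_k) - y_k‖². -/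
/-!
Along the segment from `x` to `y`, the function `t ↦ φ (x + t(y - x)) - t⟪∇φ x, y - x⟫ - (L/2)t²‖y - x‖²`
has nonpositive derivative for `t ≥ 0` by the Lipschitz bound, which gives the descent lemma
`φ y ≤ φ x + ⟪∇φ x, y - x⟫ + (L/2)‖y - x‖²`. For the step `y = x - η h` with inexact gradient `h`,
polarization `2⟪g, h⟫ = ‖g‖² + ‖h‖² - ‖g - h‖²` and `‖h‖² ≤ 2‖g‖² + 2‖g - h‖²` turn this into a
one-step decrease; summing over the iterates telescopes.
-/

open scoped RealInnerProductSpace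

section

variable {F : Type*} [NormedAddCommGroup F] [InnerProductSpace ℝ F] [CompleteSpace F]

theorem HasGradientAt.hasDerivAt_comp_add_smul {φ : F → ℝ} {g x v : F} {t : ℝ}
    (h : HasGradientAt φ g (x + t • v)) :
    HasDerivAt (fun s : ℝ => φ (x + s • v)) ⟪g, v⟫ t := by
  have hline : HasDerivAt (fun s : ℝ => x + s • v) v t := by
    simpa using ((hasDerivAt_id t).smul_const v).const_add x
  simpa [Function.comp_def] using h.hasFDerivAt.comp_hasDerivAt t hline

theorem le_add_inner_add_sq_of_lipschitz_gradient {φ : F → ℝ} {g : F → F} {L : ℝ}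
    (hgrad : ∀ z, HasGradientAt φ (g z) z) {x : F}
    (hlip : ∀ z, ‖g z - g x‖ ≤ L * ‖z - x‖) (y : F) :
    φ y ≤ φ x + ⟪g x, y - x⟫ + L / 2 * ‖y - x‖ ^ 2 := by
  set v := y - x
  let ψ : ℝ → ℝ := fun t => φ (x + t • v) - t * ⟪g x, v⟫ - L / 2 * t ^ 2 * ‖v‖ ^ 2
  have hψ : ∀ t, HasDerivAt ψ (⟪g (x + t • v), v⟫ - ⟪g x, v⟫ - L * t * ‖v‖ ^ 2) t := by
    intro t
    have := (((hgrad (x + t • v)).hasDerivAt_comp_add_smul).sub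
      ((hasDerivAt_id t).mul_const ⟪g x, v⟫)).sub
      (((hasDerivAt_pow 2 t).const_mul (L / 2)).mul_const (‖v‖ ^ 2))
    exact this.congr_deriv (by simp only [Nat.cast_ofNat, Nat.add_one_sub_one, pow_one]; ring)
  have hψ_nonpos : ∀ t, 0 ≤ t → ⟪g (x + t • v), v⟫ - ⟪g x, v⟫ - L * t * ‖v‖ ^ 2 ≤ 0 := by
    intro t ht
    have hinner : ⟪g (x + t • v) - g x, v⟫ ≤ L * t * ‖v‖ ^ 2 := calc
      ⟪g (x + t • v) - g x, v⟫ ≤ ‖g (x + t • v) - g x‖ * ‖v‖ := real_inner_le_norm _ _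
      _ ≤ L * ‖t • v‖ * ‖v‖ := by gcongr; simpa using hlip (x + t • v)
      _ = L * t * ‖v‖ ^ 2 := by rw [norm_smul, Real.norm_of_nonneg ht]; ring
    rw [inner_sub_left] at hinner
    linarith
  have hanti : AntitoneOn ψ (Set.Ici 0) :=
    antitoneOn_of_hasDerivWithinAt_nonpos (convex_Ici 0)
      (fun t _ => (hψ t).continuousAt.continuousWithinAt)
      (fun t _ => (hψ t).hasDerivWithinAt)
      (fun t ht => hψ_nonpos t (le_of_lt (by simpa using ht)))
  have := hanti Set.self_mem_Ici (Set.mem_Ici.mpr zero_le_one) zero_le_one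
  simp only [ψ, one_smul, zero_smul, add_zero, one_mul, zero_mul, one_pow, zero_pow two_ne_zero,
    mul_zero, sub_zero, add_sub_cancel, v] at this
  linarith

theorem le_of_inexact_gradient_step {φ : F → ℝ} {g : F → F} {L η : ℝ}
    (hgrad : ∀ z, HasGradientAt φ (g z) z) {x : F} (hlip : ∀ z, ‖g z - g x‖ ≤ L * ‖z - x‖)
    (hL : 0 ≤ L) (hη : 0 ≤ η) (h : F) :
    φ (x - η • h) ≤ φ x - η / 2 * (1 - 2 * L * η) * ‖g x‖ ^ 2
      + η / 2 * (1 + 2 * L * η) * ‖g x - h‖ ^ 2 := by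
  have hdescent := le_add_inner_add_sq_of_lipschitz_gradient hgrad hlip (x - η • h)
  have hstep : x - η • h - x = -(η • h) := by abel
  rw [hstep, inner_neg_right, real_inner_smul_right, norm_neg, norm_smul, Real.norm_of_nonneg hη]
    at hdescent
  have hpolar := norm_sub_sq_real (g x) h
  have hh : ‖h‖ ^ 2 ≤ 2 * ‖g x‖ ^ 2 + 2 * ‖g x - h‖ ^ 2 := by
    have htri : ‖h‖ ≤ ‖g x‖ + ‖g x - h‖ := by
      simpa using norm_sub_le (g x) (g x - h)
    nlinarith [sq_nonneg (‖g x‖ - ‖g x - h‖), norm_nonneg h]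
  nlinarith [mul_le_mul_of_nonneg_left hh (by positivity : 0 ≤ L * η ^ 2), sq_nonneg ‖h‖]

end

theorem stmt_6_general {d n : ℕ} (φ : EuclideanSpace ℝ (Fin d) → ℝ)
    (gφ : EuclideanSpace ℝ (Fin d) → EuclideanSpace ℝ (Fin d))
    (Φgrad : EuclideanSpace ℝ (Fin d) → EuclideanSpace ℝ (Fin n) → EuclideanSpace ℝ (Fin d))
    (ystar : EuclideanSpace ℝ (Fin d) → EuclideanSpace ℝ (Fin n))
    (Lφ Lxy ηx : ℝ) (hLφ : 0 < Lφ) (hηx : 0 < ηx)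
    (hgrad : ∀ z, HasGradientAt φ (gφ z) z)
    (hlip : ∀ z z', ‖gφ z - gφ z'‖ ≤ Lφ * ‖z - z'‖)
    (x : ℕ → EuclideanSpace ℝ (Fin d)) (y : ℕ → EuclideanSpace ℝ (Fin n))
    (hupdate : ∀ k, x (k + 1) = x k - ηx • Φgrad (x k) (y k))
    (hbound : ∀ k, ‖gφ (x k) - Φgrad (x k) (y k)‖ ≤ Lxy * ‖ystar (x k) - y k‖)
    (N : ℕ) :
    φ (x N) ≤ φ (x 0)
      - ηx / 2 * (1 - 2 * Lφ * ηx) * ∑ k ∈ Finset.range N, ‖gφ (x k)‖ ^ 2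
      + ηx / 2 * (1 + 2 * Lφ * ηx) * Lxy ^ 2
          * ∑ k ∈ Finset.range N, ‖ystar (x k) - y k‖ ^ 2 := by
  have hstep : ∀ k, φ (x (k + 1)) - φ (x k) ≤
      ηx / 2 * (1 + 2 * Lφ * ηx) * Lxy ^ 2 * ‖ystar (x k) - y k‖ ^ 2
        - ηx / 2 * (1 - 2 * Lφ * ηx) * ‖gφ (x k)‖ ^ 2 := by
    intro k
    have hdecrease := le_of_inexact_gradient_step hgrad (fun z => hlip z (x k)) hLφ.le hηx.le
      (Φgrad (x k) (y k))
    have herror : ‖gφ (x k) - Φgrad (x k) (y k)‖ ^ 2 ≤ Lxy ^ 2 * ‖ystar (x k) - y k‖ ^ 2 := by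
      rw [← mul_pow]; gcongr; exact hbound k
    rw [← hupdate] at hdecrease
    linarith [mul_le_mul_of_nonneg_left herror (by positivity : 0 ≤ ηx / 2 * (1 + 2 * Lφ * ηx))]
  calc φ (x N) = φ (x 0) + ∑ k ∈ Finset.range N, (φ (x (k + 1)) - φ (x k)) :=
        Finset.eq_sum_range_sub (fun k => φ (x k)) N
    _ ≤ φ (x 0) + ∑ k ∈ Finset.range N,
          (ηx / 2 * (1 + 2 * Lφ * ηx) * Lxy ^ 2 * ‖ystar (x k) - y k‖ ^ 2
            - ηx / 2 * (1 - 2 * Lφ * ηx) * ‖gφ (x k)‖ ^ 2) :=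
        add_le_add_right (Finset.sum_le_sum fun k _ => hstep k) _
    _ = _ := by rw [Finset.sum_sub_distrib, ← Finset.mul_sum, ← Finset.mul_sum]; ring

/-- Descent inequality for GD-RGA: with `L_φ`-Lipschitz gradient of `φ`, explicit steps
`x_{k+1} = x_k - η_x ∇_x Φ(x_k, y_k)`, `∇φ(x_k) = ∇_x Φ(x_k, y*(x_k))` and
`‖∇φ(x_k) - ∇_x Φ(x_k,y_k)‖ ≤ L_xy ‖y*(x_k) - y_k‖`, one has for any `η_x > 0`, `N ≥ 1`:
`φ(x_N) ≤ φ(x_0) - (η_x/2)(1-2L_φη_x) ∑ ‖∇φ(x_k)‖² + (η_x/2)(1+2L_φη_x) L_xy² ∑ ‖y*(x_k)-y_k‖²`. -/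
theorem stmt_6 {d n : ℕ} (φ : EuclideanSpace ℝ (Fin d) → ℝ)
    (gφ : EuclideanSpace ℝ (Fin d) → EuclideanSpace ℝ (Fin d))
    (Φgrad : EuclideanSpace ℝ (Fin d) → EuclideanSpace ℝ (Fin n) → EuclideanSpace ℝ (Fin d))
    (ystar : EuclideanSpace ℝ (Fin d) → EuclideanSpace ℝ (Fin n))
    (Lφ Lxy ηx : ℝ) (hLφ : 0 < Lφ) (hLxy : 0 < Lxy) (hηx : 0 < ηx)
    (hgrad : ∀ z, HasGradientAt φ (gφ z) z)
    (hlip : ∀ z z', ‖gφ z - gφ z'‖ ≤ Lφ * ‖z - z'‖)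
    (x : ℕ → EuclideanSpace ℝ (Fin d)) (y : ℕ → EuclideanSpace ℝ (Fin n))
    (hupdate : ∀ k, x (k + 1) = x k - ηx • Φgrad (x k) (y k))
    (hformula : ∀ k, gφ (x k) = Φgrad (x k) (ystar (x k)))
    (hbound : ∀ k, ‖gφ (x k) - Φgrad (x k) (y k)‖ ≤ Lxy * ‖ystar (x k) - y k‖)
    (N : ℕ) (hN : 1 ≤ N) :
    φ (x N) ≤ φ (x 0)
      - ηx / 2 * (1 - 2 * Lφ * ηx) * ∑ k ∈ Finset.range N, ‖gφ (x k)‖ ^ 2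
      + ηx / 2 * (1 + 2 * Lφ * ηx) * Lxy ^ 2
          * ∑ k ∈ Finset.range N, ‖ystar (x k) - y k‖ ^ 2 :=
  stmt_6_general φ gφ Φgrad ystar Lφ Lxy ηx hLφ hηx hgrad hlip x y hupdate hbound N
end

section
/- Let φ be ρ-weakly convex and differentiable, and let x_{k+1} satisfy x_{k+1} - x_k = -η_x ∇_x Φ(x_{k+1}, y_k) (proximal step), with ‖∇φ(x_{k+1}) - ∇_x Φ(x_{k+1}, y_k)‖ ≤ L_{xy}‖y*(x_{k+1}) - y_k‖. Then for any η_x > 0 and N ≥ 1: φ(x_N) ≤ φ(x_0) - (η_x/2)(1 - 2ρη_x) ∑_{k=0}^{N-1} ‖∇φ(x_{k+1})‖² + (η_x/2)(1 + 2ρη_x) L_{xy}² ∑_{k=0}^{N-1} ‖y*(x_{k+1}) - y_k‖². -/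
/-!
Along an implicit step `x' - x = -η G`, the upper weak-convexity inequality at `x'` gives
`φ x' ≤ φ x - η ⟪g, G⟫ + (ρ η² / 2) ‖G‖²` with `g = ∇φ x'`. Splitting `G = g - e`, the
polarization identity `2 ⟪g, G⟫ = ‖g‖² + ‖G‖² - ‖e‖²` and `‖G‖² ≤ 2 ‖g‖² + 2 ‖e‖²` turn this
into a descent in `‖g‖²` up to an error in `‖e‖² ≤ L² ‖y*(x') - y‖²`; summing telescopes.
-/

open scoped RealInnerProductSpace

section InnerProductSpace

variable {E : Type*} [NormedAddCommGroup E] [InnerProductSpace ℝ E]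

lemma neg_mul_inner_add_mul_norm_smul_sq_le {ρ η : ℝ} (hρ : 0 ≤ ρ) (hη : 0 ≤ η) (g G : E) :
    -(η * ⟪g, G⟫) + ρ / 2 * ‖η • G‖ ^ 2
      ≤ -(η / 2 * (1 - 2 * ρ * η) * ‖g‖ ^ 2) + η / 2 * (1 + 2 * ρ * η) * ‖g - G‖ ^ 2 := by
  have hpolar : ‖g‖ ^ 2 - ‖g - G‖ ^ 2 ≤ 2 * ⟪g, G⟫ := by
    nlinarith [norm_sub_sq_real g G, sq_nonneg ‖G‖]
  have hG : ‖G‖ ^ 2 ≤ 2 * ‖g‖ ^ 2 + 2 * ‖g - G‖ ^ 2 := by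
    have : ‖G‖ ≤ ‖g‖ + ‖g - G‖ := by simpa using norm_sub_le g (g - G)
    nlinarith [sq_nonneg (‖g‖ - ‖g - G‖), norm_nonneg G]
  rw [norm_smul, mul_pow, Real.norm_eq_abs, sq_abs]
  nlinarith [mul_le_mul_of_nonneg_left hpolar hη,
    mul_le_mul_of_nonneg_left hG (by positivity : 0 ≤ ρ * η ^ 2)]

lemma le_sub_add_of_weakConvex_implicit_step {φ : E → ℝ} {x x' g G : E} {ρ η : ℝ}
    (hρ : 0 ≤ ρ) (hη : 0 ≤ η)
    (hwc : φ x' ≤ φ x + ⟪g, x' - x⟫ + ρ / 2 * ‖x - x'‖ ^ 2) (hstep : x' - x = -(η • G)) :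
    φ x' ≤ φ x - η / 2 * (1 - 2 * ρ * η) * ‖g‖ ^ 2
      + η / 2 * (1 + 2 * ρ * η) * ‖g - G‖ ^ 2 := by
  have hdist : x - x' = η • G := by rw [← neg_sub, hstep, neg_neg]
  rw [hstep, hdist, inner_neg_right, real_inner_smul_right] at hwc
  linarith [neg_mul_inner_add_mul_norm_smul_sq_le hρ hη g G]

end InnerProductSpace

lemma le_sub_sum_add_sum_of_forall_succ_le {u a b : ℕ → ℝ}
    (h : ∀ k, u (k + 1) ≤ u k - a k + b k) (N : ℕ) :
    u N ≤ u 0 - ∑ k ∈ Finset.range N, a k + ∑ k ∈ Finset.range N, b k := by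
  have := Finset.sum_le_sum fun k (_ : k ∈ Finset.range N) ↦
    (by linarith [h k] : u (k + 1) - u k ≤ b k - a k)
  rw [Finset.sum_range_sub, Finset.sum_sub_distrib] at this
  linarith

theorem stmt_7_general {d n : ℕ} (φ : EuclideanSpace ℝ (Fin d) → ℝ)
    (gφ : EuclideanSpace ℝ (Fin d) → EuclideanSpace ℝ (Fin d))
    (Φgrad : EuclideanSpace ℝ (Fin d) → EuclideanSpace ℝ (Fin n) → EuclideanSpace ℝ (Fin d))
    (ystar : EuclideanSpace ℝ (Fin d) → EuclideanSpace ℝ (Fin n))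
    (ρ Lxy ηx : ℝ) (hρ : 0 < ρ) (hηx : 0 < ηx)
    (hwc : ∀ x' x : EuclideanSpace ℝ (Fin d),
      φ x' ≤ φ x + ⟪gφ x', x' - x⟫ + ρ / 2 * ‖x - x'‖ ^ 2)
    (x : ℕ → EuclideanSpace ℝ (Fin d)) (y : ℕ → EuclideanSpace ℝ (Fin n))
    (hupdate : ∀ k, x (k + 1) - x k = -(ηx • Φgrad (x (k + 1)) (y k)))
    (hbound : ∀ k, ‖gφ (x (k + 1)) - Φgrad (x (k + 1)) (y k)‖
      ≤ Lxy * ‖ystar (x (k + 1)) - y k‖)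
    (N : ℕ) :
    φ (x N) ≤ φ (x 0)
      - ηx / 2 * (1 - 2 * ρ * ηx) * ∑ k ∈ Finset.range N, ‖gφ (x (k + 1))‖ ^ 2
      + ηx / 2 * (1 + 2 * ρ * ηx) * Lxy ^ 2
          * ∑ k ∈ Finset.range N, ‖ystar (x (k + 1)) - y k‖ ^ 2 := by
  have hstep : ∀ k, φ (x (k + 1)) ≤ φ (x k)
      - ηx / 2 * (1 - 2 * ρ * ηx) * ‖gφ (x (k + 1))‖ ^ 2
      + ηx / 2 * (1 + 2 * ρ * ηx) * Lxy ^ 2 * ‖ystar (x (k + 1)) - y k‖ ^ 2 := by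
    intro k
    have hbound_sq := pow_le_pow_left₀ (norm_nonneg _) (hbound k) 2
    have hcoeff : 0 ≤ ηx / 2 * (1 + 2 * ρ * ηx) := by positivity
    have := le_sub_add_of_weakConvex_implicit_step hρ.le hηx.le (hwc _ _) (hupdate k)
    nlinarith [mul_le_mul_of_nonneg_left hbound_sq hcoeff]
  simpa only [Finset.mul_sum] using le_sub_sum_add_sum_of_forall_succ_le (u := fun k ↦ φ (x k)) hstep N

/-- Descent inequality for PD-RGA: with `φ` `ρ`-weakly convex (upper inequality
`φ(x') ≤ φ(x) + ⟪∇φ(x'), x'-x⟫ + (ρ/2)‖x-x'‖²`), implicit steps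
`x_{k+1} - x_k = -η_x ∇_x Φ(x_{k+1}, y_k)` and
`‖∇φ(x_{k+1}) - ∇_x Φ(x_{k+1},y_k)‖ ≤ L_xy ‖y*(x_{k+1}) - y_k‖`, one has for any
`η_x > 0`, `N ≥ 1`:
`φ(x_N) ≤ φ(x_0) - (η_x/2)(1-2ρη_x) ∑ ‖∇φ(x_{k+1})‖² + (η_x/2)(1+2ρη_x) L_xy² ∑ ‖y*(x_{k+1})-y_k‖²`. -/
theorem stmt_7 {d n : ℕ} (φ : EuclideanSpace ℝ (Fin d) → ℝ)
    (gφ : EuclideanSpace ℝ (Fin d) → EuclideanSpace ℝ (Fin d))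
    (Φgrad : EuclideanSpace ℝ (Fin d) → EuclideanSpace ℝ (Fin n) → EuclideanSpace ℝ (Fin d))
    (ystar : EuclideanSpace ℝ (Fin d) → EuclideanSpace ℝ (Fin n))
    (ρ Lxy ηx : ℝ) (hρ : 0 < ρ) (hLxy : 0 < Lxy) (hηx : 0 < ηx)
    (hgrad : ∀ z, HasGradientAt φ (gφ z) z)
    (hwc : ∀ x' x : EuclideanSpace ℝ (Fin d),
      φ x' ≤ φ x + ⟪gφ x', x' - x⟫ + ρ / 2 * ‖x - x'‖ ^ 2)
    (x : ℕ → EuclideanSpace ℝ (Fin d)) (y : ℕ → EuclideanSpace ℝ (Fin n))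
    (hupdate : ∀ k, x (k + 1) - x k = -(ηx • Φgrad (x (k + 1)) (y k)))
    (hbound : ∀ k, ‖gφ (x (k + 1)) - Φgrad (x (k + 1)) (y k)‖
      ≤ Lxy * ‖ystar (x (k + 1)) - y k‖)
    (N : ℕ) (hN : 1 ≤ N) :
    φ (x N) ≤ φ (x 0)
      - ηx / 2 * (1 - 2 * ρ * ηx) * ∑ k ∈ Finset.range N, ‖gφ (x (k + 1))‖ ^ 2
      + ηx / 2 * (1 + 2 * ρ * ηx) * Lxy ^ 2
          * ∑ k ∈ Finset.range N, ‖ystar (x (k + 1)) - y k‖ ^ 2 :=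
  stmt_7_general φ gφ Φgrad ystar ρ Lxy ηx hρ hηx hwc x y hupdate hbound N
end

section
/- Let g(x) = 1/2 - x² for |x| ≤ 1/2 and g(x) = (|x|-1)² for |x| > 1/2, and let 0 < η < 1/2. Then the proximal operator of g at a point z ∈ ℝ with step η is given by: prox_{ηg}(z) = z/(1-2η) if |z| ≤ 1/2 - η; prox_{ηg}(z) = (z + 2η)/(1+2η) if z ≥ 1/2 - η; prox_{ηg}(z) = (z - 2η)/(1+2η) if z ≤ -(1/2 - η). -/
/-!
`u ↦ g u + u ^ 2` is convex (it equals `1/2 + 2 dist(u, [-1/2, 1/2]) ^ 2`), so the prox objective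
`F u = g u + (u - z) ^ 2 / (2η)` is strongly convex once `2η < 1`. Each candidate `w` satisfies the
first-order condition `z = η s + (1 - 2η) w` for a subgradient `s` of `g + (·) ^ 2` at `w`, which gives
the quadratic growth `F u ≥ F w + (1 - 2η) / (2η) · (u - w) ^ 2`; hence `w` is the unique minimizer.
-/

open Set
open scoped RealInnerProductSpace

theorem isMinOn_univ_and_eq_of_forall_ne_lt {α β : Type*} [LinearOrder β] {F : α → β} {w : α}
    (h : ∀ u ≠ w, F w < F u) : IsMinOn F univ w ∧ ∀ u, IsMinOn F univ u → u = w := by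
  refine ⟨isMinOn_univ_iff.mpr fun u => ?_, fun u hu => ?_⟩
  · rcases eq_or_ne u w with rfl | hu
    · exact le_rfl
    · exact (h u hu).le
  · by_contra hne
    exact (h u hne).not_ge (isMinOn_univ_iff.mp hu w)

section InnerProductSpace

variable {E : Type*} [NormedAddCommGroup E] [InnerProductSpace ℝ E]

theorem prox_objective_lt_of_subgradient {g : E → ℝ} {η : ℝ} {s w z : E}
    (hη0 : 0 < η) (hη1 : η < 1 / 2)
    (hsub : ∀ u, g w + ‖w‖ ^ 2 + ⟪s, u - w⟫ ≤ g u + ‖u‖ ^ 2)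
    (hz : z = η • s + (1 - 2 * η) • w) {u : E} (hu : u ≠ w) :
    g w + ‖w - z‖ ^ 2 / (2 * η) < g u + ‖u - z‖ ^ 2 / (2 * η) := by
  obtain ⟨d, rfl⟩ : ∃ d, u = w + d := ⟨u - w, by abel⟩
  have hd : 0 < ‖d‖ := norm_pos_iff.mpr fun h => hu (by simp [h])
  have hwz : w - z = (2 * η) • w - η • s := by rw [hz]; module
  have hgap := hsub (w + d)
  simp only [add_sub_cancel_left, norm_add_sq_real] at hgap
  have hobj : ‖w + d - z‖ ^ 2 = ‖w - z‖ ^ 2 + 2 * (2 * η * ⟪w, d⟫ - η * ⟪s, d⟫) + ‖d‖ ^ 2 := by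
    rw [add_sub_right_comm, norm_add_sq_real, hwz, inner_sub_left, inner_smul_left,
      inner_smul_left]
    simp
  rw [hobj, ← sub_pos]
  have hsplit : g (w + d) + (‖w - z‖ ^ 2 + 2 * (2 * η * ⟪w, d⟫ - η * ⟪s, d⟫) + ‖d‖ ^ 2) / (2 * η)
      - (g w + ‖w - z‖ ^ 2 / (2 * η))
      = (g (w + d) - g w + 2 * ⟪w, d⟫ - ⟪s, d⟫ + ‖d‖ ^ 2) + (1 - 2 * η) / (2 * η) * ‖d‖ ^ 2 := by
    field_simp
    ring
  -- the first bracket is the (nonnegative) subgradient gap of `g + ‖·‖²` at `w`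
  rw [hsplit]
  have hgrowth : 0 < (1 - 2 * η) / (2 * η) * ‖d‖ ^ 2 :=
    mul_pos (div_pos (by linarith) (by linarith)) (by positivity)
  linarith

end InnerProductSpace

noncomputable def toyReg (x : ℝ) : ℝ := if |x| ≤ 1 / 2 then 1 / 2 - x ^ 2 else (|x| - 1) ^ 2

theorem toyReg_neg (x : ℝ) : toyReg (-x) = toyReg x := by
  simp only [toyReg, abs_neg, neg_sq]

theorem toyReg_of_abs_le {x : ℝ} (hx : |x| ≤ 1 / 2) : toyReg x = 1 / 2 - x ^ 2 := if_pos hx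

theorem toyReg_of_half_le {x : ℝ} (hx : 1 / 2 ≤ x) : toyReg x = (x - 1) ^ 2 := by
  rcases hx.eq_or_lt with rfl | hx
  · norm_num [toyReg]
  · rw [toyReg, if_neg (by rw [abs_of_pos (by linarith)]; linarith),
      abs_of_pos (by linarith)]

theorem half_le_toyReg_add_sq (u : ℝ) : 1 / 2 ≤ toyReg u + u ^ 2 := by
  wlog hu : 0 ≤ u generalizing u
  · simpa [toyReg_neg] using this (-u) (by linarith)
  rcases le_total u (1 / 2) with hu' | hu'
  · rw [toyReg_of_abs_le (abs_le.mpr ⟨by linarith, hu'⟩)]; linarith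
  · rw [toyReg_of_half_le hu']; nlinarith [sq_nonneg (u - 1 / 2)]

theorem toyReg_add_sq_subgradient_of_half_le {w : ℝ} (hw : 1 / 2 ≤ w) (u : ℝ) :
    toyReg w + w ^ 2 + (4 * w - 2) * (u - w) ≤ toyReg u + u ^ 2 := by
  rw [toyReg_of_half_le hw]
  rcases le_or_gt (1 / 2) u with hu | hu
  · rw [toyReg_of_half_le hu]; nlinarith [sq_nonneg (u - w)]
  · have hmin := half_le_toyReg_add_sq u
    nlinarith [mul_nonneg (by linarith : (0 : ℝ) ≤ 2 * w - 1)
      (by linarith : (0 : ℝ) ≤ w + 1 / 2 - 2 * u)]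

theorem toyReg_add_sq_subgradient_of_le_neg_half {w : ℝ} (hw : w ≤ -(1 / 2)) (u : ℝ) :
    toyReg w + w ^ 2 + (4 * w + 2) * (u - w) ≤ toyReg u + u ^ 2 := by
  have := toyReg_add_sq_subgradient_of_half_le (w := -w) (by linarith) (-u)
  rw [toyReg_neg, toyReg_neg] at this
  linarith

theorem toyReg_add_sq_le_of_abs_le {w : ℝ} (hw : |w| ≤ 1 / 2) (u : ℝ) :
    toyReg w + w ^ 2 ≤ toyReg u + u ^ 2 := by
  rw [toyReg_of_abs_le hw, sub_add_cancel]
  exact half_le_toyReg_add_sq u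

theorem isMinOn_prox_objective_of_subgradient {g : ℝ → ℝ} {η s w z : ℝ}
    (hη0 : 0 < η) (hη1 : η < 1 / 2)
    (hsub : ∀ u, g w + w ^ 2 + s * (u - w) ≤ g u + u ^ 2) (hz : z = η * s + (1 - 2 * η) * w) :
    IsMinOn (fun u => g u + (u - z) ^ 2 / (2 * η)) univ w ∧
      ∀ u, IsMinOn (fun u => g u + (u - z) ^ 2 / (2 * η)) univ u → u = w := by
  refine isMinOn_univ_and_eq_of_forall_ne_lt fun u hu => ?_
  have hsub' : ∀ u, g w + ‖w‖ ^ 2 + ⟪s, u - w⟫ ≤ g u + ‖u‖ ^ 2 := fun u => by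
    simpa [Real.norm_eq_abs, sq_abs, Real.inner_apply, mul_comm] using hsub u
  simpa [Real.norm_eq_abs, sq_abs] using
    prox_objective_lt_of_subgradient hη0 hη1 hsub' (by simpa using hz) hu

/-- Closed-form proximal operator of the toy regularizer: for `0 < η < 1/2` and `z ∈ ℝ`,
the (unique) minimizer of `u ↦ g(u) + (u-z)²/(2η)` is `z/(1-2η)` when `|z| ≤ 1/2 - η`,
`(z+2η)/(1+2η)` when `z ≥ 1/2 - η`, and `(z-2η)/(1+2η)` when `z ≤ -(1/2 - η)`. -/
theorem stmt_19 (g : ℝ → ℝ)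
    (hg : ∀ x, g x = if |x| ≤ 1 / 2 then 1 / 2 - x ^ 2 else (|x| - 1) ^ 2)
    (η : ℝ) (hη0 : 0 < η) (hη1 : η < 1 / 2) (z : ℝ) :
    (|z| ≤ 1 / 2 - η →
      IsMinOn (fun u => g u + (u - z) ^ 2 / (2 * η)) Set.univ (z / (1 - 2 * η)) ∧
      ∀ u, IsMinOn (fun u' => g u' + (u' - z) ^ 2 / (2 * η)) Set.univ u →
        u = z / (1 - 2 * η)) ∧
    (z ≥ 1 / 2 - η →
      IsMinOn (fun u => g u + (u - z) ^ 2 / (2 * η)) Set.univ ((z + 2 * η) / (1 + 2 * η)) ∧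
      ∀ u, IsMinOn (fun u' => g u' + (u' - z) ^ 2 / (2 * η)) Set.univ u →
        u = (z + 2 * η) / (1 + 2 * η)) ∧
    (z ≤ -(1 / 2 - η) →
      IsMinOn (fun u => g u + (u - z) ^ 2 / (2 * η)) Set.univ ((z - 2 * η) / (1 + 2 * η)) ∧
      ∀ u, IsMinOn (fun u' => g u' + (u' - z) ^ 2 / (2 * η)) Set.univ u →
        u = (z - 2 * η) / (1 + 2 * η)) := by
  obtain rfl : g = toyReg := funext hg
  have h1m : 0 < 1 - 2 * η := by linarith
  have h1p : 0 < 1 + 2 * η := by linarith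
  refine ⟨fun hz => ?_, fun hz => ?_, fun hz => ?_⟩
  · have hw : |z / (1 - 2 * η)| ≤ 1 / 2 := by
      rw [abs_div, abs_of_pos h1m, div_le_iff₀ h1m]; linarith
    refine isMinOn_prox_objective_of_subgradient (s := 0) hη0 hη1
      (fun u => by simpa using toyReg_add_sq_le_of_abs_le hw u) ?_
    rw [mul_zero, zero_add, mul_div_cancel₀ _ h1m.ne']
  · have hw : 1 / 2 ≤ (z + 2 * η) / (1 + 2 * η) := by rw [le_div_iff₀ h1p]; linarith
    refine isMinOn_prox_objective_of_subgradient hη0 hη1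
      (toyReg_add_sq_subgradient_of_half_le hw) ?_
    field_simp; ring
  · have hw : (z - 2 * η) / (1 + 2 * η) ≤ -(1 / 2) := by rw [div_le_iff₀ h1p]; linarith
    refine isMinOn_prox_objective_of_subgradient hη0 hη1
      (toyReg_add_sq_subgradient_of_le_neg_half hw) ?_
    field_simp; ring
end
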